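/- arXiv:1711.05159 — 2 statements merged into one kernel-verified Lean document; each statement's English description precedes it below -/
import Mathlib

section
/- In the Day convolution closed structure on presheaves over a small symmetric monoidal category C enriched in a complete and cocomplete cartesian closed category H, if Q : C^op → H preserves limits of a class F of diagrams (i.e. sends F-colimits in C to limits in H) and each functor (X ⊗ −) on C preserves F-colimits, then for any presheaf P the internal hom (P ⊸ Q), defined by (P ⊸ Q)(X) = Nat(P, Q(X ⊗ −)), also preserves F-limits. -/
/-!
`P ⊸ Q` factors as `X ↦ Q(X ⊗ −)` followed by `Nat(P, −)`, and the corepresentable functor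
`Nat(P, −)` preserves limits. Limits of presheaves are computed pointwise, and at `Y` the
first functor is `X ↦ Q(X ⊗ Y) ≅ Q(Y ⊗ X)` by the braiding, which sends `c` to a limit by
hypothesis.
-/

open CategoryTheory MonoidalCategory Limits Opposite

universe u

variable {C : Type u} [SmallCategory C] [MonoidalCategory C]

/-- The Day-convolution internal hom of presheaves:
`(P ⊸ Q)(X) = Nat(P, Q(X ⊗ −))`. -/
@[simps]
def dayHom (P Q : Cᵒᵖ ⥤ Type u) : Cᵒᵖ ⥤ Type u where
  obj X := P ⟶ (tensorLeft X.unop).op ⋙ Q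
  map {X Y} f := TypeCat.ofHom fun α => α ≫ Functor.whiskerRight (NatTrans.op ((curriedTensor C).map f.unop)) Q

section

variable {H : Type*} [Category H]

/-- `dayHom P Q` is definitionally `tensorLeftPrecomp Q ⋙ coyoneda.obj (op P)`. -/
def tensorLeftPrecomp (Q : Cᵒᵖ ⥤ H) : Cᵒᵖ ⥤ Cᵒᵖ ⥤ H where
  obj X := (tensorLeft X.unop).op ⋙ Q
  map f := Functor.whiskerRight (NatTrans.op ((curriedTensor C).map f.unop)) Q

def isLimitMapConeTensorLeftPrecomp [BraidedCategory C] (Q : Cᵒᵖ ⥤ H)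
    {K : Type*} [Category K] {D : K ⥤ C} (c : Cocone D)
    (hQ : ∀ Z : C, IsLimit (Q.mapCone ((tensorLeft Z).mapCocone c).op)) :
    IsLimit ((tensorLeftPrecomp Q).mapCone c.op) :=
  evaluationJointlyReflectsLimits _ fun Y =>
    (show IsLimit (((tensorLeft Y.unop).op ⋙ Q).mapCone c.op) from hQ Y.unop).mapConeEquiv
      (Functor.isoWhiskerRight (NatIso.op (BraidedCategory.tensorLeftIsoTensorRight Y.unop)).symm Q)

end

theorem dayHom_preserves_limits_general [SymmetricCategory C]
    (P Q : Cᵒᵖ ⥤ Type u)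
    {K : Type u} [SmallCategory K] (D : K ⥤ C) (c : Cocone D)
    (hQ : ∀ Z : C, IsLimit (Q.mapCone ((tensorLeft Z).mapCocone c).op)) :
    Nonempty (IsLimit ((dayHom P Q).mapCone c.op)) :=
  ⟨isLimitOfPreserves (coyoneda.obj (op P)) (isLimitMapConeTensorLeftPrecomp Q c hQ)⟩

/-- in the Day convolution closed structure on presheaves over a
small symmetric monoidal category `C`, if `Q` sends a colimit cocone `c` of the
class `F` (together with its translates under the functors `X ⊗ −`, which are
again `F`-colimits since each `X ⊗ −` preserves `F`-colimits) to limit cones,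
then for any presheaf `P` the internal hom `P ⊸ Q`, defined by
`(P ⊸ Q)(X) = Nat(P, Q(X ⊗ −))`, also sends `c` to a limit cone. -/
theorem dayHom_preserves_limits [SymmetricCategory C]
    (P Q : Cᵒᵖ ⥤ Type u)
    {K : Type u} [SmallCategory K] (D : K ⥤ C) (c : Cocone D)
    (hc : IsColimit c)
    (htensor : ∀ Z : C, IsColimit ((tensorLeft Z).mapCocone c))
    (hQ : ∀ Z : C, IsLimit (Q.mapCone ((tensorLeft Z).mapCocone c).op)) :
    Nonempty (IsLimit ((dayHom P Q).mapCone c.op)) :=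
  dayHom_preserves_limits_general P Q D c hQ
end

section
/- Let C be a small H-enriched category (H cartesian closed, locally presentable) and F a class of weighted colimits in C. Then the full subcategory C̄ = [C^op, H]_F of F-limit-preserving enriched presheaves is reflective in the presheaf category [C^op, H]: the inclusion C̄ → [C^op, H] has a left adjoint. Consequently C̄ is complete and cocomplete. -/
/-!
A presheaf `P` sends a cocone `c` over `D` to a limit cone iff it is orthogonal to the comparison
map `colim (D ⋙ yoneda) ⟶ yoneda c.pt`: by the Yoneda lemma, precomposition with this map is the
canonical map `P c.pt ⟶ lim P ∘ Dᵒᵖ`. Hence the presheaves in question form the orthogonality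
class of a small set of morphisms in the locally presentable category `Cᵒᵖ ⥤ Type u`, which is
reflective by the orthogonal-subcategory theorem; a reflective subcategory of a complete and
cocomplete category is again complete and cocomplete.
-/

open CategoryTheory Limits

namespace CategoryTheory

lemma exists_isCardinalPresentable_forall {𝒜 : Type*} [Category.{u} 𝒜] {ι : Type u}
    (X : ι → 𝒜) [∀ i, IsPresentable.{u} (X i)] :
    ∃ (κ : Cardinal.{u}) (_ : Fact κ.IsRegular), ∀ i, IsCardinalPresentable (X i) κ := by
  choose κ hκ hX using fun i ↦ (inferInstance : IsPresentable.{u} (X i)).exists_cardinal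
  have : Fact (Order.succ (max (⨆ i, κ i) Cardinal.aleph0)).IsRegular :=
    ⟨Cardinal.isRegular_succ (le_max_right _ _)⟩
  refine ⟨_, this, fun i ↦ ?_⟩
  exact isCardinalPresentable_of_le _ ((le_ciSup Cardinal.bddAbove_of_small i).trans
    ((le_max_left _ _).trans (Order.le_succ _)))

lemma MorphismProperty.isRightAdjoint_ι_isLocal_of_isLocallyPresentable {𝒜 : Type*}
    [Category.{u} 𝒜] [IsLocallyPresentable.{u} 𝒜] (W : MorphismProperty 𝒜) [W.IsSmall.{u}] :
    W.isLocal.ι.IsRightAdjoint := by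
  obtain ⟨ι, A, B, f, rfl⟩ := (isSmall_iff_eq_ofHoms.{u} W).1 inferInstance
  obtain ⟨κ, _, hκ⟩ := exists_isCardinalPresentable_forall (Sum.elim A B)
  obtain ⟨κ₀, _, _⟩ := IsLocallyPresentable.exists_cardinal.{u} 𝒜
  exact isRightAdjoint_ι_isLocal _ κ fun _ _ _ ⟨i⟩ ↦ ⟨hκ (.inl i), hκ (.inr i)⟩

lemma Limits.IsColimit.bijective_desc_comp_iff {𝒜 : Type*} [Category 𝒜] {K : Type*}
    [Category K] {G : K ⥤ 𝒜} {t : Cocone G} (ht : IsColimit t) (d : Cocone G) (Z : 𝒜) :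
    Function.Bijective (fun g : d.pt ⟶ Z ↦ ht.desc d ≫ g) ↔
      Nonempty (IsLimit ((yoneda.obj Z).mapCone d.op)) := by
  have hlim := (Types.isLimit_iff_bijective_sectionOfCone _).1
    ⟨isLimitOfPreserves (yoneda.obj Z) ht.op⟩
  have hfac : Types.sectionOfCone ((yoneda.obj Z).mapCone d.op) =
      Types.sectionOfCone ((yoneda.obj Z).mapCone t.op) ∘ fun g : d.pt ⟶ Z ↦ ht.desc d ≫ g := by
    funext g
    ext k
    simp [Types.sectionOfCone]
  rw [Types.isLimit_iff_bijective_sectionOfCone, hfac, hlim.of_comp_iff']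

variable {C : Type u} [SmallCategory C] {K : Type u} [SmallCategory K] {D : K ⥤ C}

noncomputable def Limits.Cocone.yonedaComparison (c : Cocone D) :
    colimit (D ⋙ yoneda) ⟶ yoneda.obj c.pt :=
  colimit.desc _ (yoneda.mapCocone c)

lemma Limits.Cocone.bijective_yonedaComparison_comp_iff (c : Cocone D) (P : Cᵒᵖ ⥤ Type u) :
    Function.Bijective (fun g : yoneda.obj c.pt ⟶ P ↦ c.yonedaComparison ≫ g) ↔
      Nonempty (IsLimit (P.mapCone c.op)) :=
  ((colimit.isColimit (D ⋙ yoneda)).bijective_desc_comp_iff (yoneda.mapCocone c) P).trans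
    ⟨fun ⟨h⟩ ↦ ⟨IsLimit.mapConeEquiv (curriedYonedaLemma'.app P) h⟩,
      fun ⟨h⟩ ↦ ⟨IsLimit.mapConeEquiv (curriedYonedaLemma'.app P).symm h⟩⟩

end CategoryTheory

theorem limit_preserving_presheaves_reflective_general
    (C : Type u) [SmallCategory C]
    (ι : Type u) (K : ι → Type u) [∀ i, SmallCategory (K i)]
    (D : ∀ i, K i ⥤ C) (c : ∀ i, Cocone (D i)) :
    let Pred : (Cᵒᵖ ⥤ Type u) → Prop :=
      fun P => ∀ i, Nonempty (IsLimit (P.mapCone (c i).op))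
    Nonempty (Reflective (ObjectProperty.ι Pred)) ∧
    Nonempty (HasLimits (ObjectProperty.FullSubcategory Pred)) ∧
    Nonempty (HasColimits (ObjectProperty.FullSubcategory Pred)) := by
  intro Pred
  have hPred : (MorphismProperty.ofHoms fun i ↦ (c i).yonedaComparison).isLocal = Pred := by
    ext P
    exact ⟨fun h i ↦ ((c i).bijective_yonedaComparison_comp_iff P).1 (h _ ⟨i⟩),
      fun h _ _ _ ⟨i⟩ ↦ ((c i).bijective_yonedaComparison_comp_iff P).2 (h i)⟩
  have : (ObjectProperty.ι Pred).IsRightAdjoint := by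
    rw [← hPred]
    exact MorphismProperty.isRightAdjoint_ι_isLocal_of_isLocallyPresentable _
  have : Reflective (ObjectProperty.ι Pred) := ⟨_, Adjunction.ofIsRightAdjoint _⟩
  exact ⟨⟨this⟩, ⟨hasLimits_of_reflective (ObjectProperty.ι Pred)⟩,
    ⟨hasColimits_of_reflective (ObjectProperty.ι Pred)⟩⟩

/-- let `C` be a small category (enriched in the locally
presentable cartesian closed category of types) and let `F` be a class of
colimits in `C`, given by a family of colimit cocones `c i` over diagrams
`D i : K i ⥤ C`.  Then the full subcategory `C̄ = [Cᵒᵖ, Type]_F` of presheaves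
sending each cocone `c i` to a limit cone is reflective in the presheaf
category `[Cᵒᵖ, Type]`: the inclusion has a left adjoint.  Consequently `C̄`
is complete and cocomplete. -/
theorem limit_preserving_presheaves_reflective
    (C : Type u) [SmallCategory C]
    (ι : Type u) (K : ι → Type u) [∀ i, SmallCategory (K i)]
    (D : ∀ i, K i ⥤ C) (c : ∀ i, Cocone (D i)) (hc : ∀ i, IsColimit (c i)) :
    let Pred : (Cᵒᵖ ⥤ Type u) → Prop :=
      fun P => ∀ i, Nonempty (IsLimit (P.mapCone (c i).op))
    Nonempty (Reflective (ObjectProperty.ι Pred)) ∧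
    Nonempty (HasLimits (ObjectProperty.FullSubcategory Pred)) ∧
    Nonempty (HasColimits (ObjectProperty.FullSubcategory Pred)) :=
  limit_preserving_presheaves_reflective_general C ι K D c
end
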